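/- arXiv:1812.04622 — 8 statements merged into one kernel-verified Lean document; each statement's English description precedes it below -/
import Mathlib

section
/- Let G = (I ∪ J, E) be a finite bipartite graph, q a positive integer, and d : J → ℤ≥0. Suppose x : I → ℤ≥0 satisfies Σ_{i ∈ N(S)} q · x(i) ≥ Σ_{j ∈ S} d(j) for every subset S ⊆ J. Then there exists y : I × J → ℤ≥0, supported on edges of G, such that Σ_{i ∈ N(j)} y(i,j) ≥ d(j) for all j ∈ J and Σ_{j ∈ N(i)} y(i,j) ≤ q · x(i) for all i ∈ I. -/
open Finset

private lemma stmt_1_aux {I J : Type*} [Fintype I] [Fintype J] (E : I → J → Bool) :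
    ∀ (n : ℕ) (c : I → ℕ) (d : J → ℕ), (∑ j, d j = n) →
    (∀ S : Finset J, (∑ j ∈ S, d j) ≤ ∑ i ∈ univ.filter (fun i => ∃ j ∈ S, E i j), c i) →
    ∃ y : I → J → ℕ,
      (∀ i j, y i j ≠ 0 → E i j) ∧
      (∀ j : J, d j ≤ ∑ i ∈ univ.filter (fun i => E i j), y i j) ∧
      (∀ i : I, ∑ j ∈ univ.filter (fun j => E i j), y i j ≤ c i) := by
  classical
  intro n
  induction n with
  | zero =>
    intro c d hd _
    refine ⟨fun _ _ => 0, by simp, fun j => ?_, by simp⟩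
    have hj : d j = 0 := by
      have := (Finset.sum_eq_zero_iff).mp hd j (mem_univ j)
      simpa using this
    simp [hj]
  | succ n ih =>
    intro c d hd hx
    -- notation
    set N : Finset J → Finset I := fun S => univ.filter (fun i => ∃ j ∈ S, E i j) with hN
    -- pick j0 with d j0 > 0
    have hpos : ∃ j0, 0 < d j0 := by
      by_contra h
      push_neg at h
      have : ∑ j, d j = 0 := Finset.sum_eq_zero (fun j _ => Nat.le_zero.mp (h j))
      omega
    obtain ⟨j0, hj0⟩ := hpos
    -- N is monotone, N of union
    have hNmono : ∀ S S' : Finset J, S ⊆ S' → N S ⊆ N S' := by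
      intro S S' hss i hi
      simp only [hN, mem_filter, mem_univ, true_and] at hi ⊢
      obtain ⟨j, hj, hij⟩ := hi
      exact ⟨j, hss hj, hij⟩
    have hNunion : ∀ S S' : Finset J, N (S ∪ S') = N S ∪ N S' := by
      intro S S'
      ext i
      simp only [hN, mem_filter, mem_union, mem_univ, true_and]
      constructor
      · rintro ⟨j, hj, hij⟩
        rcases hj with hj | hj
        · exact Or.inl ⟨j, hj, hij⟩
        · exact Or.inr ⟨j, hj, hij⟩
      · rintro (⟨j, hj, hij⟩ | ⟨j, hj, hij⟩)
        · exact ⟨j, Or.inl hj, hij⟩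
        · exact ⟨j, Or.inr hj, hij⟩
    -- family of tight sets avoiding j0
    set F : Finset (Finset J) :=
      univ.filter (fun S => (∑ j ∈ S, d j = ∑ i ∈ N S, c i) ∧ j0 ∉ S) with hF
    set T : Finset J := F.sup id with hT
    have hxN : ∀ S : Finset J, ∑ j ∈ S, d j ≤ ∑ i ∈ N S, c i := hx
    have hTprop : (∑ j ∈ T, d j = ∑ i ∈ N T, c i) ∧ j0 ∉ T := by
      apply Finset.sup_induction
        (p := fun S => (∑ j ∈ S, d j = ∑ i ∈ N S, c i) ∧ j0 ∉ S)
      · constructor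
        · simp [hN]
        · simp
      · rintro S ⟨hS, hj0S⟩ S' ⟨hS', hj0S'⟩
        simp only [Finset.sup_eq_union]
        constructor
        · -- tight closed under union
          have h1 : ∑ i ∈ N (S ∪ S'), c i + ∑ i ∈ N (S ∩ S'), c i
              ≤ ∑ i ∈ N S, c i + ∑ i ∈ N S', c i := by
            rw [hNunion]
            have hsub : N (S ∩ S') ⊆ N S ∩ N S' := by
              intro i hi
              rw [Finset.mem_inter]
              exact ⟨hNmono _ _ Finset.inter_subset_left hi,
                hNmono _ _ Finset.inter_subset_right hi⟩
            calc ∑ i ∈ N S ∪ N S', c i + ∑ i ∈ N (S ∩ S'), c i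
                ≤ ∑ i ∈ N S ∪ N S', c i + ∑ i ∈ N S ∩ N S', c i :=
                  Nat.add_le_add_left (Finset.sum_le_sum_of_subset hsub) _
              _ = ∑ i ∈ N S, c i + ∑ i ∈ N S', c i := Finset.sum_union_inter
          have h2 : ∑ j ∈ S ∪ S', d j + ∑ j ∈ S ∩ S', d j
              = ∑ j ∈ S, d j + ∑ j ∈ S', d j := Finset.sum_union_inter
          have h3 := hxN (S ∪ S')
          have h4 := hxN (S ∩ S')
          omega
        · simp only [Finset.mem_union]
          tauto
      · intro S hS
        simp only [hF, mem_filter] at hS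
        exact hS.2
    obtain ⟨hTtight, hj0T⟩ := hTprop
    -- find i0 ∈ N {j0} \ N T with c i0 > 0
    have hins := hxN (insert j0 T)
    have hinsN : N (insert j0 T) = (N {j0} \ N T) ∪ N T := by
      rw [Finset.insert_eq, hNunion, Finset.sdiff_union_self_eq_union]
    have hinsD : ∑ j ∈ insert j0 T, d j = d j0 + ∑ j ∈ T, d j :=
      Finset.sum_insert hj0T
    have hsplit : ∑ i ∈ N (insert j0 T), c i
        = ∑ i ∈ N {j0} \ N T, c i + ∑ i ∈ N T, c i := by
      rw [hinsN, Finset.sum_union Finset.sdiff_disjoint]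
    have hdiff : d j0 ≤ ∑ i ∈ N {j0} \ N T, c i := by omega
    have hi0 : ∃ i0 ∈ N {j0} \ N T, 0 < c i0 := by
      by_contra h
      push_neg at h
      have : ∑ i ∈ N {j0} \ N T, c i = 0 :=
        Finset.sum_eq_zero (fun i hi => Nat.le_zero.mp (h i hi))
      omega
    obtain ⟨i0, hi0mem, hci0⟩ := hi0
    have hi0Nj0 : i0 ∈ N {j0} := (Finset.mem_sdiff.mp hi0mem).1
    have hi0NT : i0 ∉ N T := (Finset.mem_sdiff.mp hi0mem).2
    have hEi0j0 : E i0 j0 := by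
      simp only [hN, mem_filter, mem_singleton] at hi0Nj0
      obtain ⟨-, j, hj, hij⟩ := hi0Nj0
      subst hj; exact hij
    -- new demand and capacity
    set d' : J → ℕ := Function.update d j0 (d j0 - 1) with hd'
    set c' : I → ℕ := Function.update c i0 (c i0 - 1) with hc'
    -- d' sums to n
    have hd'sum : ∑ j, d' j = n := by
      have e1 : ∑ j, d' j = (d j0 - 1) + ∑ j ∈ univ \ {j0}, d j := by
        rw [hd']; exact Finset.sum_update_of_mem (mem_univ j0) d _
      have e2 : ∑ j, d j = ∑ j ∈ univ \ {j0}, d j + d j0 :=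
        Finset.sum_eq_sum_sdiff_singleton_add (mem_univ j0) d
      omega
    -- c' pointwise facts
    have hc'le : ∀ i, c' i ≤ c i := by
      intro i
      by_cases h : i = i0
      · subst h; rw [hc', Function.update_self]; omega
      · rw [hc', Function.update_of_ne h]
    have hc'ge : ∀ i, c i ≤ c' i + 1 := by
      intro i
      by_cases h : i = i0
      · subst h; rw [hc', Function.update_self]; omega
      · rw [hc', Function.update_of_ne h]; omega
    have hc'eq : ∀ i ≠ i0, c' i = c i := fun i h => Function.update_of_ne h _ _
    -- the Hall condition for (c', d')
    have hx' : ∀ S : Finset J,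
        (∑ j ∈ S, d' j) ≤ ∑ i ∈ univ.filter (fun i => ∃ j ∈ S, E i j), c' i := by
      intro S
      have hcle : ∑ i ∈ N S, c' i ≤ ∑ i ∈ N S, c i :=
        Finset.sum_le_sum (fun i _ => hc'le i)
      have hcge : ∑ i ∈ N S, c i ≤ ∑ i ∈ N S, c' i + 1 := by
        by_cases hmem : i0 ∈ N S
        · calc ∑ i ∈ N S, c i ≤ ∑ i ∈ N S, (c' i + if i = i0 then 1 else 0) := by
                apply Finset.sum_le_sum
                intro i _
                by_cases h : i = i0
                · simpa [h] using hc'ge i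
                · simp [h, hc'eq i h]
            _ = ∑ i ∈ N S, c' i + 1 := by
                rw [Finset.sum_add_distrib]
                congr 1
                rw [Finset.sum_ite_eq' (N S) i0 (fun _ => 1)]
                simp [hmem]
        · have h0 : ∀ i ∈ N S, c' i = c i :=
            fun i hi => hc'eq i (fun h => hmem (by rwa [h] at hi))
          have heq : ∑ i ∈ N S, c' i = ∑ i ∈ N S, c i := Finset.sum_congr rfl h0
          omega
      by_cases hjS : j0 ∈ S
      · -- demand dropped by 1, capacity dropped by at most 1
        have hDS : ∑ j ∈ S, d' j + 1 = ∑ j ∈ S, d j := by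
          have e1 : ∑ j ∈ S, d' j = (d j0 - 1) + ∑ j ∈ S \ {j0}, d j := by
            rw [hd']; exact Finset.sum_update_of_mem hjS d _
          have e2 : ∑ j ∈ S, d j = ∑ j ∈ S \ {j0}, d j + d j0 :=
            Finset.sum_eq_sum_sdiff_singleton_add hjS d
          omega
        have := hxN S
        show ∑ j ∈ S, d' j ≤ ∑ i ∈ N S, c' i
        omega
      · -- demand unchanged
        have hDS : ∑ j ∈ S, d' j = ∑ j ∈ S, d j := by
          apply Finset.sum_congr rfl
          intro j hj
          exact Function.update_of_ne (fun h => hjS (by rwa [h] at hj)) _ _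
        show ∑ j ∈ S, d' j ≤ ∑ i ∈ N S, c' i
        by_cases htight : ∑ j ∈ S, d j = ∑ i ∈ N S, c i
        · -- tight: S ⊆ T, i0 ∉ N S
          have hST : S ⊆ T := by
            have hSF : S ∈ F := by
              rw [hF, mem_filter]
              exact ⟨mem_univ _, htight, hjS⟩
            exact Finset.le_sup (f := id) hSF
          have hi0NS : i0 ∉ N S := fun h => hi0NT (hNmono _ _ hST h)
          have h0 : ∀ i ∈ N S, c' i = c i :=
            fun i hi => hc'eq i (fun h => hi0NS (by rwa [h] at hi))
          have heq : ∑ i ∈ N S, c' i = ∑ i ∈ N S, c i := Finset.sum_congr rfl h0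
          have := hxN S
          omega
        · have := hxN S
          have hstrict : ∑ j ∈ S, d j < ∑ i ∈ N S, c i := lt_of_le_of_ne this htight
          show ∑ j ∈ S, d' j ≤ ∑ i ∈ N S, c' i
          omega
    -- apply IH
    obtain ⟨y', hy'supp, hy'dem, hy'cap⟩ := ih c' d' hd'sum hx'
    -- add one unit on (i0, j0)
    refine ⟨fun i j => y' i j + (if i = i0 ∧ j = j0 then 1 else 0), ?_, ?_, ?_⟩
    · intro i j h
      by_cases hij : i = i0 ∧ j = j0
      · obtain ⟨h1, h2⟩ := hij
        rw [h1, h2]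
        exact hEi0j0
      · simp only [hij, if_neg, not_false_iff, add_zero] at h
        exact hy'supp i j h
    · intro j
      by_cases hj : j = j0
      · rw [hj]
        have hi0mem' : i0 ∈ univ.filter (fun i => E i j0) := by
          simp [hEi0j0]
        have hsum : ∑ i ∈ univ.filter (fun i => E i j0),
            (y' i j0 + (if i = i0 ∧ j0 = j0 then 1 else 0))
            = ∑ i ∈ univ.filter (fun i => E i j0), y' i j0 + 1 := by
          rw [Finset.sum_add_distrib]
          congr 1
          simp only [and_true]
          rw [Finset.sum_ite_eq' (univ.filter (fun i => E i j0)) i0 (fun _ => 1)]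
          simp [hi0mem']
        rw [hsum]
        have := hy'dem j0
        have hdj0 : d' j0 = d j0 - 1 := Function.update_self _ _ _
        omega
      · have := hy'dem j
        have hdj : d' j = d j := Function.update_of_ne hj _ _
        calc d j = d' j := hdj.symm
          _ ≤ ∑ i ∈ univ.filter (fun i => E i j), y' i j := this
          _ ≤ ∑ i ∈ univ.filter (fun i => E i j),
              (y' i j + (if i = i0 ∧ j = j0 then 1 else 0)) :=
            Finset.sum_le_sum (fun i _ => Nat.le_add_right _ _)
    · intro i
      by_cases hi : i = i0
      · rw [hi]
        have hj0mem : j0 ∈ univ.filter (fun j => E i0 j) := by simp [hEi0j0]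
        have hsum : ∑ j ∈ univ.filter (fun j => E i0 j),
            (y' i0 j + (if i0 = i0 ∧ j = j0 then 1 else 0))
            = ∑ j ∈ univ.filter (fun j => E i0 j), y' i0 j + 1 := by
          rw [Finset.sum_add_distrib]
          congr 1
          simp only [true_and]
          rw [Finset.sum_ite_eq' (univ.filter (fun j => E i0 j)) j0 (fun _ => 1)]
          simp [hj0mem]
        rw [hsum]
        have := hy'cap i0
        have hci0' : c' i0 = c i0 - 1 := Function.update_self _ _ _
        omega
      · have := hy'cap i
        have hsum : ∑ j ∈ univ.filter (fun j => E i j),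
            (y' i j + (if i = i0 ∧ j = j0 then 1 else 0))
            = ∑ j ∈ univ.filter (fun j => E i j), y' i j := by
          apply Finset.sum_congr rfl
          intro j _
          simp [hi]
        rw [hsum]
        calc ∑ j ∈ univ.filter (fun j => E i j), y' i j ≤ c' i := this
          _ = c i := hc'eq i hi
          _ ≤ c i := le_refl _

theorem stmt_1 {I J : Type*} [Fintype I] [Fintype J]
    (E : I → J → Bool) (q : ℕ) (hq : 0 < q) (d : J → ℕ) (x : I → ℕ)
    (hx : ∀ S : Finset J,
      (∑ j ∈ S, d j) ≤ ∑ i ∈ univ.filter (fun i => ∃ j ∈ S, E i j), q * x i) :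
    ∃ y : I → J → ℕ,
      (∀ i j, y i j ≠ 0 → E i j) ∧
      (∀ j : J, d j ≤ ∑ i ∈ univ.filter (fun i => E i j), y i j) ∧
      (∀ i : I, ∑ j ∈ univ.filter (fun j => E i j), y i j ≤ q * x i) := by
  exact stmt_1_aux E (∑ j, d j) (fun i => q * x i) d rfl hx
end

section
/- In the flow network H built from a bipartite graph G = (I ∪ J, E) with source s, sink t, arcs s→i of capacity q·x(i), arcs i→j of infinite capacity for edges {i,j} ∈ E, and arcs j→t of capacity d(j): if x satisfies Σ_{i ∈ N_G(Q)} q·x(i) ≥ Σ_{j ∈ Q} d(j) for all Q ⊆ J, then every finite-capacity s-t cut (S,T) in H has capacity at least Σ_{j ∈ J} d(j). -/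
open Finset

/- The capacity of a finite-capacity cut is at least the demand of the regions on the sink
side, `Q = J ∖ Bs`, plus that of the regions on the source side. No location of the source
side is adjacent to `Q`, so the neighbourhood `N(Q)` lies on the sink side, and the
hypothesis on `x` bounds the demand of `Q` by the capacity of the arcs `s → i`, `i ∈ N(Q)`. -/

theorem filter_exists_adj_subset_compl {I J : Type*} [Fintype I] [DecidableEq I]
    (E : I → J → Bool) {A : Finset I} {Q : Finset J}
    (hA : ∀ i ∈ A, ∀ j ∈ Q, E i j = false) :
    univ.filter (fun i => ∃ j ∈ Q, E i j) ⊆ Aᶜ := by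
  intro i hi
  obtain ⟨j, hj, hE⟩ := (mem_filter.mp hi).2
  exact mem_compl.mpr fun hiA => by simp [hA i hiA j hj] at hE

/-- An s-t cut of the flow network H is encoded by the sets `A ⊆ I` and `Bs ⊆ J`
of vertices on the source side; its capacity is `∑_{i ∉ A} q·x(i) + ∑_{j ∈ Bs} d(j)`. -/
theorem stmt_2_general {I J : Type*} [Fintype I] [DecidableEq I] [Fintype J]
    (E : I → J → Bool) (q : ℕ) (x : I → ℕ) (d : J → ℕ)
    (hx : ∀ Q : Finset J,
      (∑ j ∈ Q, d j) ≤ ∑ i ∈ univ.filter (fun i => ∃ j ∈ Q, E i j), q * x i)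
    (A : Finset I) (Bs : Finset J)
    (hfin : ∀ i ∈ A, ∀ j : J, E i j → j ∈ Bs) :
    (∑ j : J, d j) ≤ (∑ i ∈ Aᶜ, q * x i) + ∑ j ∈ Bs, d j := by
  classical
  have hsink : univ.filter (fun i => ∃ j ∈ Bsᶜ, E i j) ⊆ Aᶜ :=
    filter_exists_adj_subset_compl E fun i hi j hj =>
      Bool.eq_false_iff.mpr fun hE => mem_compl.mp hj (hfin i hi j hE)
  calc (∑ j : J, d j) = (∑ j ∈ Bsᶜ, d j) + ∑ j ∈ Bs, d j := (sum_compl_add_sum _ _).symm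
    _ ≤ (∑ i ∈ Aᶜ, q * x i) + ∑ j ∈ Bs, d j := by
      gcongr
      exact (hx Bsᶜ).trans (sum_le_sum_of_subset hsink)

/-- An s-t cut of the flow network H is encoded by the sets `A ⊆ I` and `Bs ⊆ J`
of locations and regions lying on the source side (together with `s`).
Finite capacity means no infinite arc `i → j` crosses the cut, i.e.
every edge leaving `A` lands in `Bs`.  The capacity of the cut is
`∑_{i ∉ A} q·x(i) + ∑_{j ∈ Bs} d(j)`. -/
theorem stmt_2 {I J : Type*} [Fintype I] [DecidableEq I] [Fintype J]
    (E : I → J → Bool) (q : ℕ) (hq : 0 < q) (x : I → ℕ) (d : J → ℕ)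
    (hx : ∀ Q : Finset J,
      (∑ j ∈ Q, d j) ≤ ∑ i ∈ univ.filter (fun i => ∃ j ∈ Q, E i j), q * x i)
    (A : Finset I) (Bs : Finset J)
    (hfin : ∀ i ∈ A, ∀ j : J, E i j → j ∈ Bs) :
    (∑ j : J, d j) ≤ (∑ i ∈ Aᶜ, q * x i) + ∑ j ∈ Bs, d j :=
  stmt_2_general E q x d hx A Bs hfin
end

section
/- Let J be a finite set, a, b : J → ℤ≥0 with a(j) ≤ b(j) for all j, and Γ ∈ ℤ with Σ_j a(j) ≤ Γ ≤ Σ_j b(j). Define the uncertainty set U = {ξ ∈ ℤ^J : a(j) ≤ ξ(j) ≤ b(j) for all j, and Σ_j ξ(j) ≤ Γ}. Then for every subset S ⊆ J, the maximum of Σ_{j ∈ S} ξ(j) over ξ ∈ U equals min{ Σ_{j∈S} b(j), Γ − Σ_{j ∉ S} a(j) }. -/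
open Finset

lemma exists_sum_eq_aux {J : Type*} [DecidableEq J] (a b : J → ℤ)
    (hab : ∀ j, a j ≤ b j) (S : Finset J) :
    ∀ m : ℤ, (∑ j ∈ S, a j) ≤ m → m ≤ (∑ j ∈ S, b j) →
    ∃ ξ : J → ℤ, (∀ j, a j ≤ ξ j) ∧ (∀ j, ξ j ≤ b j) ∧
      (∀ j, j ∉ S → ξ j = a j) ∧ (∑ j ∈ S, ξ j) = m := by
  induction S using Finset.induction_on with
  | empty =>
    intro m h1 h2
    simp at h1 h2
    exact ⟨a, fun j => le_refl (a j), hab, fun _ _ => rfl, by simp; omega⟩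
  | @insert j s hj ih =>
    intro m h1 h2
    rw [Finset.sum_insert hj] at h1 h2
    set x : ℤ := min (b j) (m - ∑ i ∈ s, a i) with hx
    have hax : a j ≤ x := by
      have := Finset.sum_le_sum (fun i _ => hab i) (s := s)
      simp [hx]; constructor
      · exact hab j
      · omega
    have hxb : x ≤ b j := min_le_left _ _
    have hr1 : ∑ i ∈ s, a i ≤ m - x := by simp [hx]; omega
    have hr2 : m - x ≤ ∑ i ∈ s, b i := by
      have hs : ∑ i ∈ s, a i ≤ ∑ i ∈ s, b i :=
        Finset.sum_le_sum (fun i _ => hab i)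
      rcases le_total (b j) (m - ∑ i ∈ s, a i) with h | h
      · rw [hx, min_eq_left h]; omega
      · rw [hx, min_eq_right h]; omega
    obtain ⟨ξ, hξ1, hξ2, hξ3, hξ4⟩ := ih (m - x) hr1 hr2
    refine ⟨Function.update ξ j x, ?_, ?_, ?_, ?_⟩
    · intro i
      rcases eq_or_ne i j with rfl | h
      · simpa using hax
      · simp [Function.update_of_ne h]; exact hξ1 i
    · intro i
      rcases eq_or_ne i j with rfl | h
      · simpa using hxb
      · simp [Function.update_of_ne h]; exact hξ2 i
    · intro i hi
      have hij : i ≠ j := by rintro rfl; exact hi (Finset.mem_insert_self i s)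
      rw [Function.update_of_ne hij]
      exact hξ3 i (fun h => hi (Finset.mem_insert_of_mem h))
    · rw [Finset.sum_insert hj, Function.update_self]
      have : ∑ i ∈ s, Function.update ξ j x i = ∑ i ∈ s, ξ i := by
        apply Finset.sum_congr rfl
        intro i hi
        exact Function.update_of_ne (by rintro rfl; exact hj hi) _ _
      rw [this, hξ4]; ring

theorem stmt_3 {J : Type*} [Fintype J] [DecidableEq J]
    (a b : J → ℤ) (ha : ∀ j, 0 ≤ a j) (hab : ∀ j, a j ≤ b j)
    (Γ : ℤ) (hΓ₁ : ∑ j : J, a j ≤ Γ) (hΓ₂ : Γ ≤ ∑ j : J, b j)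
    (S : Finset J) :
    IsGreatest
      {t : ℤ | ∃ ξ : J → ℤ,
        (∀ j, a j ≤ ξ j) ∧ (∀ j, ξ j ≤ b j) ∧ (∑ j : J, ξ j) ≤ Γ ∧
        t = ∑ j ∈ S, ξ j}
      (min (∑ j ∈ S, b j) (Γ - ∑ j ∈ Sᶜ, a j)) := by
  have hsplit : ∀ f : J → ℤ, ∑ j : J, f j = ∑ j ∈ S, f j + ∑ j ∈ Sᶜ, f j := by
    intro f
    rw [← Finset.sum_add_sum_compl S f]
  set m := min (∑ j ∈ S, b j) (Γ - ∑ j ∈ Sᶜ, a j) with hm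
  constructor
  · -- membership
    have haΓ : ∑ j : J, a j = ∑ j ∈ S, a j + ∑ j ∈ Sᶜ, a j := hsplit a
    have h1 : ∑ j ∈ S, a j ≤ m := by
      have h2 : ∑ j ∈ S, a j ≤ ∑ j ∈ S, b j :=
        Finset.sum_le_sum (fun i _ => hab i)
      simp [hm]; omega
    have h2 : m ≤ ∑ j ∈ S, b j := min_le_left _ _
    obtain ⟨ξ, hξ1, hξ2, hξ3, hξ4⟩ := exists_sum_eq_aux a b hab S m h1 h2
    refine ⟨ξ, hξ1, hξ2, ?_, hξ4.symm⟩
    have hc : ∑ j ∈ Sᶜ, ξ j = ∑ j ∈ Sᶜ, a j :=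
      Finset.sum_congr rfl (fun i hi => hξ3 i (by simpa using hi))
    rw [hsplit ξ, hξ4, hc]
    have := min_le_right (∑ j ∈ S, b j) (Γ - ∑ j ∈ Sᶜ, a j)
    omega
  · -- upper bound
    rintro t ⟨ξ, hξ1, hξ2, hξ3, rfl⟩
    have h1 : ∑ j ∈ S, ξ j ≤ ∑ j ∈ S, b j :=
      Finset.sum_le_sum (fun i _ => hξ2 i)
    have h2 : ∑ j ∈ Sᶜ, a j ≤ ∑ j ∈ Sᶜ, ξ j :=
      Finset.sum_le_sum (fun i _ => hξ1 i)
    have h3 := hsplit ξ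
    simp [hm]; omega
end

section
/- Let G = (I ∪ J, E) be a finite bipartite graph, q ∈ ℤ>0, a, b : J → ℤ≥0 with a ≤ b, and Γ with Σ_j a(j) ≤ Γ ≤ Σ_j b(j). A vector x : I → ℤ≥0 satisfies Σ_{i ∈ N(S)} q·x(i) ≥ Σ_{j∈S} ξ(j) for all S ⊆ J and all scenarios ξ ∈ U if and only if it satisfies Σ_{i ∈ N(S)} q·x(i) ≥ min{ b(S), Γ − a(J∖S) } for all S ⊆ J. -/
open Finset

lemma exists_mid {J : Type*} [DecidableEq J] (a b : J → ℤ) (hab : ∀ j, a j ≤ b j) :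
    ∀ S : Finset J, ∀ T : ℤ, (∑ j ∈ S, a j) ≤ T → T ≤ ∑ j ∈ S, b j →
    ∃ ξ : J → ℤ, (∀ j, a j ≤ ξ j) ∧ (∀ j, ξ j ≤ b j) ∧ (∀ j ∉ S, ξ j = a j) ∧
      ∑ j ∈ S, ξ j = T := by
  intro S
  induction S using Finset.induction_on with
  | empty =>
    intro T h1 h2
    simp at h1 h2
    exact ⟨a, fun j => le_refl _, hab, fun j _ => rfl, by simp; omega⟩
  | @insert j S hjS ih =>
    intro T h1 h2
    rw [Finset.sum_insert hjS] at h1 h2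
    set v : ℤ := min (b j) (T - ∑ k ∈ S, a k) with hv
    have hav : a j ≤ v := le_min (hab j) (by omega)
    have hvb : v ≤ b j := min_le_left _ _
    have h1' : ∑ k ∈ S, a k ≤ T - v := by
      have := min_le_right (b j) (T - ∑ k ∈ S, a k); omega
    have h2' : T - v ≤ ∑ k ∈ S, b k := by
      have hsab : ∑ k ∈ S, a k ≤ ∑ k ∈ S, b k := Finset.sum_le_sum (fun k _ => hab k)
      rcases min_cases (b j) (T - ∑ k ∈ S, a k) with ⟨h, _⟩ | ⟨h, _⟩ <;> rw [hv, h] <;> omega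
    obtain ⟨ξ, hξ1, hξ2, hξ3, hξ4⟩ := ih (T - v) h1' h2'
    refine ⟨Function.update ξ j v, ?_, ?_, ?_, ?_⟩
    · intro k
      rcases eq_or_ne k j with rfl | hk
      · simpa using hav
      · simp [Function.update_of_ne hk]; exact hξ1 k
    · intro k
      rcases eq_or_ne k j with rfl | hk
      · simpa using hvb
      · simp [Function.update_of_ne hk]; exact hξ2 k
    · intro k hk
      have hkj : k ≠ j := fun h => hk (by simp [h])
      rw [Function.update_of_ne hkj]
      exact hξ3 k (fun h => hk (Finset.mem_insert_of_mem h))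
    · rw [Finset.sum_insert hjS, Function.update_self]
      have : ∑ k ∈ S, Function.update ξ j v k = ∑ k ∈ S, ξ k :=
        Finset.sum_congr rfl (fun k hk => Function.update_of_ne (fun h => hjS (by rw [← h]; exact hk)) _ _)
      rw [this, hξ4]; ring

theorem stmt_6 {I J : Type*} [Fintype I] [Fintype J] [DecidableEq J]
    (E : I → J → Bool) (q : ℕ) (hq : 0 < q)
    (a b : J → ℤ) (ha : ∀ j, 0 ≤ a j) (hab : ∀ j, a j ≤ b j)
    (Γ : ℤ) (hΓ₁ : ∑ j : J, a j ≤ Γ) (hΓ₂ : Γ ≤ ∑ j : J, b j)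
    (x : I → ℕ) :
    (∀ S : Finset J, ∀ ξ : J → ℤ,
        (∀ j, a j ≤ ξ j) → (∀ j, ξ j ≤ b j) → (∑ j : J, ξ j) ≤ Γ →
        (∑ j ∈ S, ξ j) ≤ ∑ i ∈ univ.filter (fun i => ∃ j ∈ S, E i j), (q : ℤ) * x i)
      ↔
    (∀ S : Finset J,
        min (∑ j ∈ S, b j) (Γ - ∑ j ∈ Sᶜ, a j) ≤
          ∑ i ∈ univ.filter (fun i => ∃ j ∈ S, E i j), (q : ℤ) * x i) := by
  have hsplit : ∀ (f : J → ℤ) (S : Finset J),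
      ∑ j : J, f j = ∑ j ∈ S, f j + ∑ j ∈ Sᶜ, f j := by
    intro f S
    rw [← Finset.sum_add_sum_compl S f]
  constructor
  · intro h S
    rcases le_or_gt (∑ j ∈ S, b j) (Γ - ∑ j ∈ Sᶜ, a j) with hc | hc
    · -- min = b(S); use ξ = b on S, a off S
      set ξ : J → ℤ := fun j => if j ∈ S then b j else a j with hξ
      have hS : ∑ j ∈ S, ξ j = ∑ j ∈ S, b j :=
        Finset.sum_congr rfl (fun j hj => by simp [hξ, hj])
      have hSc : ∑ j ∈ Sᶜ, ξ j = ∑ j ∈ Sᶜ, a j :=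
        Finset.sum_congr rfl (fun j hj => by
          simp only [Finset.mem_compl] at hj; simp [hξ, hj])
      have htot : ∑ j : J, ξ j ≤ Γ := by rw [hsplit ξ S, hS, hSc]; omega
      have := h S ξ (fun j => by by_cases hj : j ∈ S <;> simp [hξ, hj, hab j])
        (fun j => by by_cases hj : j ∈ S <;> simp [hξ, hj, hab j]) htot
      rw [hS] at this
      omega
    · -- min = Γ - a(Sᶜ)
      have h1 : ∑ j ∈ S, a j ≤ Γ - ∑ j ∈ Sᶜ, a j := by
        have := hsplit a S; omega
      obtain ⟨ξ, hξ1, hξ2, hξ3, hξ4⟩ :=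
        exists_mid a b hab S (Γ - ∑ j ∈ Sᶜ, a j) h1 hc.le
      have hSc : ∑ j ∈ Sᶜ, ξ j = ∑ j ∈ Sᶜ, a j :=
        Finset.sum_congr rfl (fun j hj => hξ3 j (by simpa using hj))
      have htot : ∑ j : J, ξ j ≤ Γ := by rw [hsplit ξ S, hξ4, hSc]; omega
      have := h S ξ hξ1 hξ2 htot
      rw [hξ4] at this
      omega
  · intro h S ξ hξ1 hξ2 htot
    have h1 : ∑ j ∈ S, ξ j ≤ ∑ j ∈ S, b j := Finset.sum_le_sum (fun j _ => hξ2 j)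
    have h2 : ∑ j ∈ S, ξ j ≤ Γ - ∑ j ∈ Sᶜ, a j := by
      have := hsplit ξ S
      have : ∑ j ∈ Sᶜ, a j ≤ ∑ j ∈ Sᶜ, ξ j := Finset.sum_le_sum (fun j _ => hξ1 j)
      have := hsplit ξ S
      omega
    have := h S
    omega
end

section
/- Let G = (V, E) be a finite undirected graph with V = {1,…,n} and construct the bipartite graph G' on I = {1,…,n} and J = {n+1,…,2n} with edges {u, n+v} and {v, n+u} for every edge {u,v} ∈ E, plus {v, n+v} for every v ∈ V. Then V' ⊆ V is a dominating set of G if and only if the indicator vector x of V' (x_i = 1 iff i ∈ V') satisfies: for every nonempty S ⊆ J, there exists i ∈ N_{G'}(S) with x_i = 1. -/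
open Finset

theorem Finset.forall_nonempty_exists_mem_iff {α : Type*} (P : α → Prop) :
    (∀ S : Finset α, S.Nonempty → ∃ j ∈ S, P j) ↔ ∀ j, P j := by
  refine ⟨fun h j => ?_, fun h S ⟨j, hj⟩ => ⟨j, hj, h j⟩⟩
  obtain ⟨j', hj', hP⟩ := h {j} (singleton_nonempty j)
  rwa [mem_singleton.mp hj'] at hP

theorem SimpleGraph.dominating_iff_forall_exists_adj_or_eq {V : Type*} (G : SimpleGraph V)
    (V' : Set V) :
    (∀ u, u ∉ V' → ∃ v ∈ V', G.Adj u v) ↔ ∀ j, ∃ i ∈ V', G.Adj i j ∨ i = j := by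
  refine ⟨fun h j => ?_, fun h u hu => ?_⟩
  · by_cases hj : j ∈ V'
    · exact ⟨j, hj, Or.inr rfl⟩
    · obtain ⟨v, hv, hadj⟩ := h j hj
      exact ⟨v, hv, Or.inl hadj.symm⟩
  · obtain ⟨i, hi, hadj | rfl⟩ := h u
    · exact ⟨i, hi, hadj.symm⟩
    · exact absurd hi hu

theorem stmt_15_general {V : Type*}
    (G : SimpleGraph V) (V' : Finset V) :
    (∀ u : V, u ∉ V' → ∃ v ∈ V', G.Adj u v) ↔
    (∀ S : Finset V, S.Nonempty →
      ∃ i : V, (∃ j ∈ S, G.Adj i j ∨ i = j) ∧ i ∈ V') := by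
  have hswap : ∀ S : Finset V, (∃ i : V, (∃ j ∈ S, G.Adj i j ∨ i = j) ∧ i ∈ V') ↔
      ∃ j ∈ S, ∃ i ∈ V', G.Adj i j ∨ i = j := fun S => by
    constructor
    · rintro ⟨i, ⟨j, hj, hij⟩, hi⟩
      exact ⟨j, hj, i, hi, hij⟩
    · rintro ⟨j, hj, i, hi, hij⟩
      exact ⟨i, ⟨j, hj, hij⟩, hi⟩
  simp only [hswap, forall_nonempty_exists_mem_iff]
  exact G.dominating_iff_forall_exists_adj_or_eq (V' : Set V)

/-- The bipartite graph G' has locations I = V and regions J = a copy of V;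
location i is adjacent to region j iff i and j are adjacent in G or i = j. -/
theorem stmt_15 {V : Type*} [Fintype V] [DecidableEq V]
    (G : SimpleGraph V) (V' : Finset V) :
    (∀ u : V, u ∉ V' → ∃ v ∈ V', G.Adj u v) ↔
    (∀ S : Finset V, S.Nonempty →
      ∃ i : V, (∃ j ∈ S, G.Adj i j ∨ i = j) ∧ i ∈ V') :=
  stmt_15_general G V'
end

section
/- Let G = (I ∪ J, E) be a finite bipartite graph, q = 2, d : J → ℤ≥0 with every j having a neighbor. Construct a graph H whose vertex set consists of d(j) copies of each j ∈ J, with an edge between a copy of j₁ and a copy of j₂ (possibly j₁ = j₂, distinct copies) whenever N(j₁) ∩ N(j₂) ≠ ∅. Then the optimal value of Min-2-Multiset Multicover on (G, d) equals the minimum size of an edge cover of H (assuming Σ_j d(j) ≥ 1 and H has no isolated vertices). -/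
open Finset


theorem sum_update_row {I J : Type*} [Fintype I] [DecidableEq I]
    (y : I → J → ℕ) (i : I) (row : J → ℕ) (j : J) :
    ∑ i', Function.update y i row i' j
      = row j + ∑ i' ∈ univ.erase i, y i' j := by
  rw [← Finset.add_sum_erase univ _ (mem_univ i), Function.update_self]
  exact congrArg _ (Finset.sum_congr rfl (fun i' hi' => by
    rw [Function.update_of_ne (Finset.ne_of_mem_erase hi')]))

theorem sum_update_nat {I : Type*} [Fintype I] [DecidableEq I]
    (x : I → ℕ) (i : I) (a : ℕ) :
    ∑ i', Function.update x i a i' = a + ∑ i' ∈ univ.erase i, x i' := by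
  rw [← Finset.add_sum_erase univ _ (mem_univ i), Function.update_self]
  exact congrArg _ (Finset.sum_congr rfl (fun i' hi' => by
    rw [Function.update_of_ne (Finset.ne_of_mem_erase hi')]))


theorem cover_of_feasible {I J : Type*} [Fintype I] [Fintype J] [DecidableEq J]
    (E : I → J → Bool) (d : J → ℕ)
    (hiso : ∀ w : (j : J) × Fin (d j), ∃ w' : (j : J) × Fin (d j),
      w ≠ w' ∧ ∃ i : I, E i w.1 ∧ E i w'.1) :
    ∀ (N : ℕ) (S : Finset ((j : J) × Fin (d j))) (x : I → ℕ) (y : I → J → ℕ),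
      S.card ≤ N →
      (∀ i j, y i j ≠ 0 → E i j) →
      (∀ j, (S.filter (fun w => w.1 = j)).card ≤ ∑ i, y i j) →
      (∀ i, ∑ j, y i j ≤ 2 * x i) →
      ∃ C : Finset (((j : J) × Fin (d j)) × ((j : J) × Fin (d j))),
        (∀ e ∈ C, e.1 ≠ e.2 ∧ ∃ i : I, E i e.1.1 ∧ E i e.2.1) ∧
        (∀ w ∈ S, ∃ e ∈ C, w = e.1 ∨ w = e.2) ∧ C.card ≤ ∑ i, x i := by
  classical
  intro N
  induction N with
  | zero =>
    intro S x y hS _ _ _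
    have : S = ∅ := Finset.card_eq_zero.mp (Nat.le_zero.mp hS)
    subst this
    exact ⟨∅, by simp, by simp, Nat.zero_le _⟩
  | succ N ih =>
    intro S x y hS hsupp hdem hrow
    rcases S.eq_empty_or_nonempty with rfl | ⟨w, hw⟩
    · exact ⟨∅, by simp, by simp, Nat.zero_le _⟩
    have hc1 : 1 ≤ (S.filter (fun v => v.1 = w.1)).card :=
      Finset.card_pos.mpr ⟨w, Finset.mem_filter.mpr ⟨hw, rfl⟩⟩
    have hs1 : 1 ≤ ∑ i, y i w.1 := le_trans hc1 (hdem w.1)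
    have hex : ∃ i, 1 ≤ y i w.1 := by
      by_contra h
      push_neg at h
      have : ∑ i, y i w.1 = 0 := Finset.sum_eq_zero (fun i _ => by have := h i; omega)
      omega
    obtain ⟨i, hyi⟩ := hex
    have hEiw : E i w.1 := hsupp i w.1 (by omega)
    have hxi : 1 ≤ x i := by
      have h1 : y i w.1 ≤ ∑ j, y i j :=
        Finset.single_le_sum (fun _ _ => Nat.zero_le _) (mem_univ w.1)
      have := hrow i
      omega
    have hsums : ∀ (g : I → ℕ), ∑ i', g i' = g i + ∑ i' ∈ univ.erase i, g i' :=
      fun g => (Finset.add_sum_erase univ g (mem_univ i)).symm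
    by_cases hp : ∃ w' ∈ S, w' ≠ w ∧
        (if w'.1 = w.1 then 2 ≤ y i w.1 else 1 ≤ y i w'.1)
    · -- Case A : pair w with a partner w'
      obtain ⟨w', hw'S, hww', hcond⟩ := hp
      set δ : J → ℕ :=
        fun j' => (if w.1 = j' then 1 else 0) + (if w'.1 = j' then 1 else 0) with hδ
      have hδle : ∀ j', δ j' ≤ y i j' := by
        intro j'
        by_cases h1 : w.1 = j' <;> by_cases h2 : w'.1 = j'
        · have h3 : w'.1 = w.1 := h2.trans h1.symm
          rw [if_pos h3] at hcond
          simp only [hδ, if_pos h1, if_pos h2]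
          rw [← h1]; omega
        · simp only [hδ, if_pos h1, if_neg h2]
          rw [← h1]; omega
        · have h3 : w'.1 ≠ w.1 := fun hh => h1 (hh ▸ h2)
          rw [if_neg h3] at hcond
          simp only [hδ, if_neg h1, if_pos h2]
          rw [← h2]; omega
        · simp only [hδ, if_neg h1, if_neg h2]
          omega
      have hEiw' : E i w'.1 := by
        by_cases h3 : w'.1 = w.1
        · rw [h3]; exact hEiw
        · rw [if_neg h3] at hcond
          exact hsupp i w'.1 (by omega)
      set y' : I → J → ℕ := Function.update y i (fun j' => y i j' - δ j') with hy'
      set x' : I → ℕ := Function.update x i (x i - 1) with hx'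
      set S' : Finset ((j : J) × Fin (d j)) := (S.erase w).erase w' with hS'
      have hy'i : ∀ j', y' i j' = y i j' - δ j' := fun j' => by
        rw [hy', Function.update_self]
      have hy'ne : ∀ i', i' ≠ i → y' i' = y i' := fun i' h =>
        Function.update_of_ne h _ _
      have hS'card : S'.card ≤ N := by
        have h1 : (S.erase w).card = S.card - 1 := Finset.card_erase_of_mem hw
        have h2 : S'.card ≤ (S.erase w).card := Finset.card_le_card (Finset.erase_subset _ _)
        omega
      have hsupp' : ∀ i' j', y' i' j' ≠ 0 → E i' j' := by
        intro i' j' h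
        rcases eq_or_ne i' i with rfl | hne
        · rw [hy'i] at h
          exact hsupp i' j' (by omega)
        · rw [hy'ne i' hne] at h
          exact hsupp i' j' h
      have hdem' : ∀ j', ((S'.filter (fun v => v.1 = j')).card) ≤ ∑ i', y' i' j' := by
        intro j'
        have hsum : ∑ i', y' i' j' = (y i j' - δ j') + ∑ i' ∈ univ.erase i, y i' j' :=
          sum_update_row y i _ j'
        have hsum2 : ∑ i', y i' j' = y i j' + ∑ i' ∈ univ.erase i, y i' j' :=
          hsums (fun i' => y i' j')
        have hfe : S'.filter (fun v => v.1 = j')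
            = ((S.filter (fun v => v.1 = j')).erase w).erase w' := by
          rw [hS', Finset.filter_erase, Finset.filter_erase]
        have hd := hdem j'
        have hδle' := hδle j'
        by_cases h1 : w.1 = j' <;> by_cases h2 : w'.1 = j'
        · have hm1 : w ∈ S.filter (fun v => v.1 = j') := mem_filter.mpr ⟨hw, h1⟩
          have hm2 : w' ∈ (S.filter (fun v => v.1 = j')).erase w :=
            Finset.mem_erase.mpr ⟨hww', mem_filter.mpr ⟨hw'S, h2⟩⟩
          have hc : (S'.filter (fun v => v.1 = j')).card
              = (S.filter (fun v => v.1 = j')).card - 1 - 1 := by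
            rw [hfe, Finset.card_erase_of_mem hm2, Finset.card_erase_of_mem hm1]
          have hδval : δ j' = 2 := by simp [hδ, h1, h2]
          omega
        · have hm1 : w ∈ S.filter (fun v => v.1 = j') := mem_filter.mpr ⟨hw, h1⟩
          have hm2 : w' ∉ (S.filter (fun v => v.1 = j')).erase w := by
            intro hmem
            exact h2 (mem_filter.mp (Finset.mem_of_mem_erase hmem)).2
          have hc : (S'.filter (fun v => v.1 = j')).card
              = (S.filter (fun v => v.1 = j')).card - 1 := by
            rw [hfe, Finset.erase_eq_of_notMem hm2, Finset.card_erase_of_mem hm1]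
          have hδval : δ j' = 1 := by simp [hδ, h1, h2]
          omega
        · have hm1 : w ∉ S.filter (fun v => v.1 = j') := by
            intro hmem
            exact h1 (mem_filter.mp hmem).2
          have hm2 : w' ∈ S.filter (fun v => v.1 = j') := mem_filter.mpr ⟨hw'S, h2⟩
          have hc : (S'.filter (fun v => v.1 = j')).card
              = (S.filter (fun v => v.1 = j')).card - 1 := by
            rw [hfe, Finset.erase_eq_of_notMem hm1, Finset.card_erase_of_mem hm2]
          have hδval : δ j' = 1 := by simp [hδ, h1, h2]
          omega
        · have hm1 : w ∉ S.filter (fun v => v.1 = j') := by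
            intro hmem
            exact h1 (mem_filter.mp hmem).2
          have hm2 : w' ∉ S.filter (fun v => v.1 = j') := by
            intro hmem
            exact h2 (mem_filter.mp hmem).2
          have hc : (S'.filter (fun v => v.1 = j')).card
              = (S.filter (fun v => v.1 = j')).card := by
            rw [hfe, Finset.erase_eq_of_notMem hm1, Finset.erase_eq_of_notMem hm2]
          have hδval : δ j' = 0 := by simp [hδ, h1, h2]
          omega
      have hrow' : ∀ i', ∑ j', y' i' j' ≤ 2 * x' i' := by
        intro i'
        rcases eq_or_ne i' i with rfl | hne
        · have hδsum : ∑ j', δ j' = 2 := by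
            simp [hδ, Finset.sum_add_distrib, Finset.sum_ite_eq]
          have hsub : (∑ j', (y i' j' - δ j')) + ∑ j', δ j' = ∑ j', y i' j' := by
            rw [← Finset.sum_add_distrib]
            exact Finset.sum_congr rfl (fun j' _ => Nat.sub_add_cancel (hδle j'))
          have he1 : ∑ j', y' i' j' = ∑ j', (y i' j' - δ j') :=
            Finset.sum_congr rfl (fun j' _ => hy'i j')
          have he2 : x' i' = x i' - 1 := by rw [hx', Function.update_self]
          have := hrow i'
          omega
        · rw [hy'ne i' hne]
          have he2 : x' i' = x i' := by rw [hx', Function.update_of_ne hne]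
          rw [he2]
          exact hrow i'
      obtain ⟨C', hC'valid, hC'cov, hC'card⟩ := ih S' x' y' hS'card hsupp' hdem' hrow'
      refine ⟨insert (w, w') C', ?_, ?_, ?_⟩
      · intro e he
        rcases Finset.mem_insert.mp he with rfl | he'
        · exact ⟨Ne.symm hww', i, hEiw, hEiw'⟩
        · exact hC'valid e he'
      · intro w'' hw''
        by_cases h1 : w'' = w
        · exact ⟨(w, w'), Finset.mem_insert_self _ _, Or.inl h1⟩
        by_cases h2 : w'' = w'
        · exact ⟨(w, w'), Finset.mem_insert_self _ _, Or.inr h2⟩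
        · obtain ⟨e, heC, hor⟩ := hC'cov w''
            (Finset.mem_erase.mpr ⟨h2, Finset.mem_erase.mpr ⟨h1, hw''⟩⟩)
          exact ⟨e, Finset.mem_insert_of_mem heC, hor⟩
      · have h1 : (insert (w, w') C').card ≤ C'.card + 1 := Finset.card_insert_le _ _
        have h2 : ∑ i', x' i' = (x i - 1) + ∑ i' ∈ univ.erase i, x i' :=
          sum_update_nat x i _
        have h3 : ∑ i', x i' = x i + ∑ i' ∈ univ.erase i, x i' := hsums x
        omega
    · -- Case B : no partner available; w is covered via hiso, row i is zeroed
      obtain ⟨w₀, hne₀, i₀, hE1, hE2⟩ := hiso w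
      set y' : I → J → ℕ := Function.update y i (fun _ => 0) with hy'
      set x' : I → ℕ := Function.update x i 0 with hx'
      set S' : Finset ((j : J) × Fin (d j)) := S.erase w with hS'
      have hy'i : ∀ j', y' i j' = 0 := fun j' => by rw [hy', Function.update_self]
      have hy'ne : ∀ i', i' ≠ i → y' i' = y i' := fun i' h =>
        Function.update_of_ne h _ _
      have hS'card : S'.card ≤ N := by
        have h1 : S'.card = S.card - 1 := Finset.card_erase_of_mem hw
        omega
      have hsupp' : ∀ i' j', y' i' j' ≠ 0 → E i' j' := by
        intro i' j' h
        rcases eq_or_ne i' i with rfl | hne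
        · rw [hy'i] at h; omega
        · rw [hy'ne i' hne] at h
          exact hsupp i' j' h
      have hdem' : ∀ j', ((S'.filter (fun v => v.1 = j')).card) ≤ ∑ i', y' i' j' := by
        intro j'
        have hsum : ∑ i', y' i' j' = 0 + ∑ i' ∈ univ.erase i, y i' j' :=
          sum_update_row y i _ j'
        have hsum2 : ∑ i', y i' j' = y i j' + ∑ i' ∈ univ.erase i, y i' j' :=
          hsums (fun i' => y i' j')
        have hfe : S'.filter (fun v => v.1 = j')
            = (S.filter (fun v => v.1 = j')).erase w := by
          rw [hS', Finset.filter_erase]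
        have hd := hdem j'
        by_cases h1 : w.1 = j'
        · by_cases h2 : 2 ≤ y i j'
          · -- no other copy of region j' can remain in S'
            have hzero : S'.filter (fun v => v.1 = j') = ∅ := by
              rw [Finset.eq_empty_iff_forall_notMem]
              intro w'' hmem
              have hm := Finset.mem_filter.mp hmem
              have hmS := Finset.mem_of_mem_erase (hS' ▸ hm.1)
              have hne'' : w'' ≠ w := Finset.ne_of_mem_erase (hS' ▸ hm.1)
              have h3 : w''.1 = w.1 := hm.2.trans h1.symm
              exact hp ⟨w'', hmS, hne'', by rw [if_pos h3, h1]; exact h2⟩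
            rw [hzero]
            simp
          · have hm1 : w ∈ S.filter (fun v => v.1 = j') := mem_filter.mpr ⟨hw, h1⟩
            have hc : (S'.filter (fun v => v.1 = j')).card
                = (S.filter (fun v => v.1 = j')).card - 1 := by
              rw [hfe, Finset.card_erase_of_mem hm1]
            omega
        · by_cases h2 : 1 ≤ y i j'
          · have hzero : S.filter (fun v => v.1 = j') = ∅ := by
              rw [Finset.eq_empty_iff_forall_notMem]
              intro w'' hmem
              have hm := Finset.mem_filter.mp hmem
              have hne'' : w'' ≠ w := fun hh => h1 (hh ▸ hm.2)
              have h3 : w''.1 ≠ w.1 := fun hh => h1 (hh ▸ hm.2)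
              exact hp ⟨w'', hm.1, hne'', by rw [if_neg h3, hm.2]; exact h2⟩
            have hc : (S'.filter (fun v => v.1 = j')).card = 0 := by
              rw [hfe, hzero]
              simp
            omega
          · have hc : (S'.filter (fun v => v.1 = j')).card
                ≤ (S.filter (fun v => v.1 = j')).card := by
              rw [hfe]
              exact Finset.card_erase_le
            omega
      have hrow' : ∀ i', ∑ j', y' i' j' ≤ 2 * x' i' := by
        intro i'
        rcases eq_or_ne i' i with rfl | hne
        · have : ∑ j', y' i' j' = 0 := Finset.sum_eq_zero (fun j' _ => hy'i j')
          omega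
        · rw [hy'ne i' hne]
          have he2 : x' i' = x i' := by rw [hx', Function.update_of_ne hne]
          rw [he2]
          exact hrow i'
      obtain ⟨C', hC'valid, hC'cov, hC'card⟩ := ih S' x' y' hS'card hsupp' hdem' hrow'
      refine ⟨insert (w, w₀) C', ?_, ?_, ?_⟩
      · intro e he
        rcases Finset.mem_insert.mp he with rfl | he'
        · exact ⟨hne₀, i₀, hE1, hE2⟩
        · exact hC'valid e he'
      · intro w'' hw''
        by_cases h1 : w'' = w
        · exact ⟨(w, w₀), Finset.mem_insert_self _ _, Or.inl h1⟩
        · obtain ⟨e, heC, hor⟩ := hC'cov w'' (Finset.mem_erase.mpr ⟨h1, hw''⟩)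
          exact ⟨e, Finset.mem_insert_of_mem heC, hor⟩
      · have h1 : (insert (w, w₀) C').card ≤ C'.card + 1 := Finset.card_insert_le _ _
        have h2 : ∑ i', x' i' = 0 + ∑ i' ∈ univ.erase i, x i' :=
          sum_update_nat x i _
        have h3 : ∑ i', x i' = x i + ∑ i' ∈ univ.erase i, x i' := hsums x
        omega


theorem card_copies {J : Type*} [Fintype J] [DecidableEq J] (d : J → ℕ) (j : J) :
    (univ.filter (fun w : (j : J) × Fin (d j) => w.1 = j)).card = d j := by
  rw [show (univ.filter (fun w : (j : J) × Fin (d j) => w.1 = j))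
      = (univ : Finset (Fin (d j))).map
        ⟨fun c => (⟨j, c⟩ : (j : J) × Fin (d j)), fun a b h => by simpa using h⟩ by
    ext ⟨j', c⟩
    simp only [mem_filter, mem_univ, true_and, mem_map, Function.Embedding.coeFn_mk]
    constructor
    · rintro rfl; exact ⟨c, rfl⟩
    · rintro ⟨a, ha⟩; cases ha; rfl]
  simp

theorem feasible_of_cover {I J : Type*} [Fintype I] [Fintype J] [DecidableEq J]
    (E : I → J → Bool) (d : J → ℕ)
    (C : Finset (((j : J) × Fin (d j)) × ((j : J) × Fin (d j))))
    (hvalid : ∀ e ∈ C, e.1 ≠ e.2 ∧ ∃ i : I, E i e.1.1 ∧ E i e.2.1)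
    (hcover : ∀ w : (j : J) × Fin (d j), ∃ e ∈ C, w = e.1 ∨ w = e.2) :
    ∃ x : I → ℕ, ∃ y : I → J → ℕ,
      (∀ i j, y i j ≠ 0 → E i j) ∧
      (∀ j : J, d j ≤ ∑ i ∈ univ.filter (fun i => E i j), y i j) ∧
      (∀ i : I, (∑ j ∈ univ.filter (fun j => E i j), y i j) ≤ 2 * x i) ∧
      C.card = ∑ i : I, x i := by
  classical
  have hvc : ∀ e : {e // e ∈ C}, ∃ i : I, E i e.1.1.1 ∧ E i e.1.2.1 :=
    fun e => (hvalid e.1 e.2).2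
  choose f hf1 hf2 using hvc
  set t : (((j : J) × Fin (d j)) × ((j : J) × Fin (d j))) → J → ℕ :=
    fun e j => (if e.1.1 = j then 1 else 0) + (if e.2.1 = j then 1 else 0) with ht
  set y : I → J → ℕ :=
    fun i j => ∑ e ∈ C.attach.filter (fun e => f e = i), t e.1 j with hy
  set x : I → ℕ := fun i => (C.attach.filter (fun e => f e = i)).card with hx
  have hsupp : ∀ i j, y i j ≠ 0 → E i j := by
    intro i j h
    obtain ⟨e, he, hne⟩ : ∃ e ∈ C.attach.filter (fun e => f e = i), t e.1 j ≠ 0 := by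
      by_contra hcon
      push_neg at hcon
      exact h (Finset.sum_eq_zero hcon)
    have hfi : f e = i := (Finset.mem_filter.mp he).2
    by_cases h1 : e.1.1.1 = j
    · rw [← h1, ← hfi]; exact hf1 e
    by_cases h2 : e.1.2.1 = j
    · rw [← h2, ← hfi]; exact hf2 e
    · exact absurd (by simp [ht, h1, h2]) hne
  have hyuniv : ∀ j, ∑ i ∈ univ.filter (fun i => E i j), y i j = ∑ i, y i j := by
    intro j
    refine Finset.sum_subset (Finset.filter_subset _ _) (fun i _ hni => ?_)
    by_contra h
    exact hni (mem_filter.mpr ⟨mem_univ _, hsupp i j h⟩)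
  have hdem : ∀ j, d j ≤ ∑ i ∈ univ.filter (fun i => E i j), y i j := by
    intro j
    rw [hyuniv j]
    have h2 : ∑ i, y i j = ∑ e ∈ C.attach, t e.1 j :=
      Finset.sum_fiberwise_of_maps_to (fun e _ => mem_univ (f e)) _
    have h3 : ∑ e ∈ C.attach, t e.1 j = ∑ e ∈ C, t e j :=
      Finset.sum_attach C (fun e => t e j)
    have h4 : (univ.filter (fun w : (j : J) × Fin (d j) => w.1 = j))
        ⊆ C.biUnion (fun e => ({e.1, e.2} : Finset ((j : J) × Fin (d j))).filter
            (fun v => v.1 = j)) := by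
      intro w hwm
      obtain ⟨e, heC, hor⟩ := hcover w
      refine Finset.mem_biUnion.mpr ⟨e, heC, mem_filter.mpr ⟨?_, (mem_filter.mp hwm).2⟩⟩
      rcases hor with rfl | rfl
      · exact Finset.mem_insert_self _ _
      · exact Finset.mem_insert_of_mem (Finset.mem_singleton_self _)
    have h5 : d j ≤ (C.biUnion (fun e => ({e.1, e.2} : Finset ((j : J) × Fin (d j))).filter
        (fun v => v.1 = j))).card := by
      rw [← card_copies d j]
      exact Finset.card_le_card h4
    have h6 := Finset.card_biUnion_le (s := C)
      (t := fun e => ({e.1, e.2} : Finset ((j : J) × Fin (d j))).filter (fun v => v.1 = j))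
    have h7 : ∀ e ∈ C,
        (({e.1, e.2} : Finset ((j : J) × Fin (d j))).filter (fun v => v.1 = j)).card
          ≤ t e j := by
      intro e _
      have hsub : ({e.1, e.2} : Finset ((j : J) × Fin (d j))).filter (fun v => v.1 = j)
          ⊆ {e.1, e.2} := Finset.filter_subset _ _
      by_cases ha : e.1.1 = j <;> by_cases hb : e.2.1 = j
      · have hte : t e j = 2 := by simp [ht, ha, hb]
        rw [hte]
        exact le_trans (Finset.card_le_card hsub)
          (le_trans (Finset.card_insert_le _ _) (by simp))
      · have hte : t e j = 1 := by simp [ht, ha, hb]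
        rw [hte]
        have hsub2 : ({e.1, e.2} : Finset ((j : J) × Fin (d j))).filter (fun v => v.1 = j)
            ⊆ {e.1} := by
          intro v hv
          have h := Finset.mem_filter.mp hv
          rcases Finset.mem_insert.mp h.1 with rfl | hv2
          · exact Finset.mem_singleton_self _
          · rw [Finset.mem_singleton.mp hv2] at h
            exact absurd h.2 hb
        exact le_trans (Finset.card_le_card hsub2) (by simp)
      · have hte : t e j = 1 := by simp [ht, ha, hb]
        rw [hte]
        have hsub2 : ({e.1, e.2} : Finset ((j : J) × Fin (d j))).filter (fun v => v.1 = j)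
            ⊆ {e.2} := by
          intro v hv
          have h := Finset.mem_filter.mp hv
          rcases Finset.mem_insert.mp h.1 with rfl | hv2
          · exact absurd h.2 ha
          · exact hv2
        exact le_trans (Finset.card_le_card hsub2) (by simp)
      · have hte : t e j = 0 := by simp [ht, ha, hb]
        rw [hte]
        have hempty : ({e.1, e.2} : Finset ((j : J) × Fin (d j))).filter (fun v => v.1 = j)
            = ∅ := by
          rw [Finset.eq_empty_iff_forall_notMem]
          intro v hv
          have h := Finset.mem_filter.mp hv
          rcases Finset.mem_insert.mp h.1 with rfl | hv2
          · exact ha h.2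
          · rw [Finset.mem_singleton.mp hv2] at h
            exact hb h.2
        simp [hempty]
    have h8 : ∑ e ∈ C, (({e.1, e.2} : Finset ((j : J) × Fin (d j))).filter
        (fun v => v.1 = j)).card ≤ ∑ e ∈ C, t e j := Finset.sum_le_sum h7
    omega
  have hrow : ∀ i, (∑ j ∈ univ.filter (fun j => E i j), y i j) ≤ 2 * x i := by
    intro i
    have h1 : ∑ j ∈ univ.filter (fun j => E i j), y i j ≤ ∑ j, y i j :=
      Finset.sum_le_sum_of_subset (Finset.filter_subset _ _)
    have h2 : ∑ j, y i j = ∑ e ∈ C.attach.filter (fun e => f e = i), ∑ j, t e.1 j :=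
      Finset.sum_comm
    have h3 : ∀ e : {e // e ∈ C}, ∑ j, t e.1 j = 2 := by
      intro e
      simp [ht, Finset.sum_add_distrib, Finset.sum_ite_eq]
    have h4 : ∑ e ∈ C.attach.filter (fun e => f e = i), ∑ j, t e.1 j = 2 * x i := by
      rw [Finset.sum_congr rfl (fun e _ => h3 e), Finset.sum_const, smul_eq_mul, mul_comm]
    omega
  have hcard : C.card = ∑ i, x i := by
    rw [← Finset.card_attach]
    exact Finset.card_eq_sum_card_fiberwise (fun e _ => mem_univ (f e))
  exact ⟨x, y, hsupp, hdem, hrow, hcard⟩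


/-- Vertices of H are pairs `⟨j, c⟩` with `c` one of the `d j` copies of region `j`;
two distinct vertices are adjacent iff their regions have a common neighbor in G.
An edge cover is encoded as a finset of (ordered) pairs of adjacent vertices
covering every vertex; its minimum cardinality equals the minimum edge cover size. -/
theorem stmt_17 {I J : Type*} [Fintype I] [Fintype J] [DecidableEq J]
    (E : I → J → Bool) (d : J → ℕ)
    (hnbr : ∀ j : J, ∃ i : I, E i j)
    (hpos : 1 ≤ ∑ j : J, d j)
    (hiso : ∀ w : (j : J) × Fin (d j), ∃ w' : (j : J) × Fin (d j),
      w ≠ w' ∧ ∃ i : I, E i w.1 ∧ E i w'.1) :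
    sInf {n : ℕ | ∃ x : I → ℕ, ∃ y : I → J → ℕ,
        (∀ i j, y i j ≠ 0 → E i j) ∧
        (∀ j : J, d j ≤ ∑ i ∈ univ.filter (fun i => E i j), y i j) ∧
        (∀ i : I, (∑ j ∈ univ.filter (fun j => E i j), y i j) ≤ 2 * x i) ∧
        n = ∑ i : I, x i}
      =
    sInf {n : ℕ | ∃ C : Finset (((j : J) × Fin (d j)) × ((j : J) × Fin (d j))),
        (∀ e ∈ C, e.1 ≠ e.2 ∧ ∃ i : I, E i e.1.1 ∧ E i e.2.1) ∧
        (∀ w : (j : J) × Fin (d j), ∃ e ∈ C, w = e.1 ∨ w = e.2) ∧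
        n = C.card} := by
  classical
  set A : Set ℕ := {n : ℕ | ∃ x : I → ℕ, ∃ y : I → J → ℕ,
        (∀ i j, y i j ≠ 0 → E i j) ∧
        (∀ j : J, d j ≤ ∑ i ∈ univ.filter (fun i => E i j), y i j) ∧
        (∀ i : I, (∑ j ∈ univ.filter (fun j => E i j), y i j) ≤ 2 * x i) ∧
        n = ∑ i : I, x i} with hA
  set B : Set ℕ := {n : ℕ | ∃ C : Finset (((j : J) × Fin (d j)) × ((j : J) × Fin (d j))),
        (∀ e ∈ C, e.1 ≠ e.2 ∧ ∃ i : I, E i e.1.1 ∧ E i e.2.1) ∧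
        (∀ w : (j : J) × Fin (d j), ∃ e ∈ C, w = e.1 ∨ w = e.2) ∧
        n = C.card} with hB
  have hBne : B.Nonempty := by
    refine ⟨(Finset.image (fun w => (w, (hiso w).choose)) univ).card,
      Finset.image (fun w => (w, (hiso w).choose)) univ, ?_, ?_, rfl⟩
    · intro e he
      obtain ⟨w, _, rfl⟩ := Finset.mem_image.mp he
      exact (hiso w).choose_spec
    · intro w
      exact ⟨(w, (hiso w).choose), Finset.mem_image.mpr ⟨w, mem_univ w, rfl⟩, Or.inl rfl⟩
  have hBA : ∀ n ∈ B, n ∈ A := by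
    rintro n ⟨C, hval, hcov, hn⟩
    obtain ⟨x, y, h1, h2, h3, h4⟩ := feasible_of_cover E d C hval hcov
    exact ⟨x, y, h1, h2, h3, hn.trans h4⟩
  have hAB : ∀ n ∈ A, ∃ m ∈ B, m ≤ n := by
    rintro n ⟨x, y, h1, h2, h3, h4⟩
    set y' : I → J → ℕ := fun i j => if E i j then y i j else 0 with hy'
    have hs' : ∀ i j, y' i j ≠ 0 → E i j := by
      intro i j h
      by_cases hE : E i j
      · exact hE
      · simp [hy', hE] at h
    have hd' : ∀ j, ((univ.filter
        (fun w : (j : J) × Fin (d j) => w.1 = j)).card) ≤ ∑ i, y' i j := by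
      intro j
      rw [card_copies d j]
      calc d j ≤ ∑ i ∈ univ.filter (fun i => E i j), y i j := h2 j
        _ = ∑ i, y' i j := by rw [Finset.sum_filter]
    have hr' : ∀ i, ∑ j, y' i j ≤ 2 * x i := by
      intro i
      rw [show (∑ j, y' i j) = ∑ j ∈ univ.filter (fun j => E i j), y i j from
        (Finset.sum_filter _ _).symm]
      exact h3 i
    obtain ⟨C, hval, hcov, hcard⟩ :=
      cover_of_feasible E d hiso (univ.card) univ x y' le_rfl hs' hd' hr'
    exact ⟨C.card, ⟨C, hval, fun w => hcov w (mem_univ w), rfl⟩,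
      hcard.trans (le_of_eq h4.symm)⟩
  apply le_antisymm
  · exact Nat.sInf_le (hBA _ (Nat.sInf_mem hBne))
  · have hAne : A.Nonempty := ⟨sInf B, hBA _ (Nat.sInf_mem hBne)⟩
    obtain ⟨m, hmB, hmn⟩ := hAB _ (Nat.sInf_mem hAne)
    exact le_trans (Nat.sInf_le hmB) hmn
end

section
/- Let G = (I ∪ J, E) be a bipartite graph, q = 2, d : J → ℤ≥0, and suppose d(j₀) ≥ |I| + 1 for some j₀ ∈ J with N(j₀) ≠ ∅. Let d' equal d except d'(j₀) = d(j₀) − 2. Then OPT(G, d) = OPT(G, d') + 1, where OPT denotes the optimal value of Min-2-Multiset Multicover. -/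
open Finset

private lemma sum_if_point {α : Type*} [DecidableEq α] (s : Finset α) (f : α → ℕ) (a : α)
    (c : ℕ) (ha : a ∈ s) :
    ∑ x ∈ s, (if x = a then c else f x) = c + ∑ x ∈ s.erase a, f x := by
  rw [← Finset.add_sum_erase s _ ha, if_pos rfl]
  congr 1
  exact Finset.sum_congr rfl fun x hx => if_neg (Finset.ne_of_mem_erase hx)

/-- `opt d` is the optimal value of Min-2-Multiset Multicover with demands `d`. -/
theorem stmt_18 {I J : Type*} [Fintype I] [Fintype J] [DecidableEq J]
    (E : I → J → Bool) (d : J → ℕ)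
    (hnbr : ∀ j : J, 0 < d j → ∃ i : I, E i j)
    (j₀ : J) (hd : Fintype.card I + 1 ≤ d j₀)
    (opt : (J → ℕ) → ℕ)
    (hopt : ∀ dd : J → ℕ, opt dd = sInf {n : ℕ | ∃ x : I → ℕ, ∃ y : I → J → ℕ,
        (∀ i j, y i j ≠ 0 → E i j) ∧
        (∀ j : J, dd j ≤ ∑ i ∈ univ.filter (fun i => E i j), y i j) ∧
        (∀ i : I, (∑ j ∈ univ.filter (fun j => E i j), y i j) ≤ 2 * x i) ∧
        n = ∑ i : I, x i}) :
    opt d = opt (Function.update d j₀ (d j₀ - 2)) + 1 := by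
  classical
  set d' : J → ℕ := Function.update d j₀ (d j₀ - 2) with hd'
  set A : Set ℕ := {n : ℕ | ∃ x : I → ℕ, ∃ y : I → J → ℕ,
        (∀ i j, y i j ≠ 0 → E i j) ∧
        (∀ j : J, d j ≤ ∑ i ∈ univ.filter (fun i => E i j), y i j) ∧
        (∀ i : I, (∑ j ∈ univ.filter (fun j => E i j), y i j) ≤ 2 * x i) ∧
        n = ∑ i : I, x i} with hA
  set B : Set ℕ := {n : ℕ | ∃ x : I → ℕ, ∃ y : I → J → ℕ,
        (∀ i j, y i j ≠ 0 → E i j) ∧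
        (∀ j : J, d' j ≤ ∑ i ∈ univ.filter (fun i => E i j), y i j) ∧
        (∀ i : I, (∑ j ∈ univ.filter (fun j => E i j), y i j) ≤ 2 * x i) ∧
        n = ∑ i : I, x i} with hB
  have hdj₀pos : 0 < d j₀ := by omega
  -- a feasible solution exists for d (hence for d' as well)
  have feas : A.Nonempty := by
    choose f hf using fun j (hj : 0 < d j) => hnbr j hj
    set y : I → J → ℕ := fun i j =>
      if hj : 0 < d j then (if i = f j hj then d j else 0) else 0 with hy
    refine ⟨∑ i : I, ∑ j ∈ univ.filter (fun j => E i j), y i j,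
      fun i => ∑ j ∈ univ.filter (fun j => E i j), y i j, y, ?_, ?_, ?_, rfl⟩
    · intro i j hne
      simp only [hy] at hne
      split at hne
      · split at hne
        · next h1 h2 => exact h2 ▸ hf j h1
        · exact absurd rfl hne
      · exact absurd rfl hne
    · intro j
      rcases Nat.eq_zero_or_pos (d j) with h0 | hpos
      · omega
      · have hmem : f j hpos ∈ univ.filter (fun i => E i j) := by
          simp [hf j hpos]
        have hs : y (f j hpos) j ≤ ∑ i ∈ univ.filter (fun i => E i j), y i j :=
          Finset.single_le_sum (f := fun i => y i j) (fun i _ => Nat.zero_le _) hmem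
        have hval : y (f j hpos) j = d j := by simp [hy, hpos]
        omega
    · intro i
      exact (by omega : ∀ s : ℕ, s ≤ 2 * s) _
  have feas' : B.Nonempty := by
    obtain ⟨n, x, y, h1, h2, h3, h4⟩ := feas
    exact ⟨n, x, y, h1, fun j => by
      rcases eq_or_ne j j₀ with rfl | hj
      · simp only [hd', Function.update_self]
        have := h2 j
        omega
      · simpa [hd', Function.update_of_ne hj] using h2 j, h3, h4⟩
  rw [hopt d, hopt d', ← hA, ← hB]
  have hAm : sInf A ∈ A := Nat.sInf_mem feas
  have hBm : sInf B ∈ B := Nat.sInf_mem feas'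
  -- direction 1 : sInf A ≤ sInf B + 1
  have dir1 : sInf A ≤ sInf B + 1 := by
    obtain ⟨x, y, h1, h2, h3, h4⟩ := hBm
    obtain ⟨i₀, hi₀⟩ := hnbr j₀ hdj₀pos
    set y' : I → J → ℕ := fun i j => if i = i₀ ∧ j = j₀ then y i j + 2 else y i j with hy'
    set x' : I → ℕ := fun i => if i = i₀ then x i + 1 else x i with hx'
    refine Nat.sInf_le ⟨x', y', ?_, ?_, ?_, ?_⟩
    · intro i j hne
      simp only [hy'] at hne
      split at hne
      · next h => exact h.1 ▸ h.2 ▸ hi₀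
      · exact h1 i j hne
    · intro j
      by_cases hj : j = j₀
      · rw [hj]
        have hmem : i₀ ∈ univ.filter (fun i => E i j₀) := by simp [hi₀]
        have hsum : ∑ i ∈ univ.filter (fun i => E i j₀), y' i j₀
            = (y i₀ j₀ + 2) + ∑ i ∈ (univ.filter (fun i => E i j₀)).erase i₀, y i j₀ := by
          rw [← sum_if_point _ (fun i => y i j₀) i₀ (y i₀ j₀ + 2) hmem]
          refine Finset.sum_congr rfl fun i _ => ?_
          by_cases h : i = i₀ <;> simp [hy', h]
        have hold : y i₀ j₀ + ∑ i ∈ (univ.filter (fun i => E i j₀)).erase i₀, y i j₀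
            = ∑ i ∈ univ.filter (fun i => E i j₀), y i j₀ :=
          Finset.add_sum_erase _ (fun i => y i j₀) hmem
        have h2' := h2 j₀
        simp only [hd', Function.update_self] at h2'
        omega
      · have heq : ∑ i ∈ univ.filter (fun i => E i j), y' i j
            = ∑ i ∈ univ.filter (fun i => E i j), y i j :=
          Finset.sum_congr rfl fun i _ => by simp [hy', hj]
        have h2' := h2 j
        simp only [hd', Function.update_of_ne hj] at h2'
        omega
    · intro i
      by_cases hi : i = i₀
      · rw [hi]
        have hmem : j₀ ∈ univ.filter (fun j => E i₀ j) := by simp [hi₀]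
        have hsum : ∑ j ∈ univ.filter (fun j => E i₀ j), y' i₀ j
            = (y i₀ j₀ + 2) + ∑ j ∈ (univ.filter (fun j => E i₀ j)).erase j₀, y i₀ j := by
          rw [← sum_if_point _ (fun j => y i₀ j) j₀ (y i₀ j₀ + 2) hmem]
          refine Finset.sum_congr rfl fun j _ => ?_
          by_cases h : j = j₀ <;> simp [hy', h]
        have hold : y i₀ j₀ + ∑ j ∈ (univ.filter (fun j => E i₀ j)).erase j₀, y i₀ j
            = ∑ j ∈ univ.filter (fun j => E i₀ j), y i₀ j :=
          Finset.add_sum_erase _ (fun j => y i₀ j) hmem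
        have h3' := h3 i₀
        have hx'i : x' i₀ = x i₀ + 1 := by simp [hx']
        omega
      · have heq : ∑ j ∈ univ.filter (fun j => E i j), y' i j
            = ∑ j ∈ univ.filter (fun j => E i j), y i j :=
          Finset.sum_congr rfl fun j _ => by simp [hy', hi]
        have h3' := h3 i
        have hx'i : x' i = x i := by simp [hx', hi]
        omega
    · have hsum : ∑ i : I, x' i = (x i₀ + 1) + ∑ i ∈ univ.erase i₀, x i := by
        rw [← sum_if_point univ x i₀ (x i₀ + 1) (Finset.mem_univ i₀)]
        refine Finset.sum_congr rfl fun i _ => ?_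
        by_cases h : i = i₀ <;> simp [hx', h]
      have hold : x i₀ + ∑ i ∈ univ.erase i₀, x i = ∑ i : I, x i :=
        Finset.add_sum_erase _ _ (Finset.mem_univ i₀)
      omega
  -- direction 2 : sInf B + 1 ≤ sInf A
  have dir2 : sInf B + 1 ≤ sInf A := by
    obtain ⟨x, y, h1, h2, h3, h4⟩ := hAm
    have hpig : ∃ i₀ ∈ univ.filter (fun i => E i j₀), 2 ≤ y i₀ j₀ := by
      by_contra hcon
      push_neg at hcon
      have hle : ∑ i ∈ univ.filter (fun i => E i j₀), y i j₀
          ≤ (univ.filter (fun i => E i j₀)).card * 1 :=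
        Finset.sum_le_card_nsmul _ _ 1 (fun i hi => by have := hcon i hi; omega)
      have hcard : (univ.filter (fun i => E i j₀)).card ≤ Fintype.card I :=
        Finset.card_filter_le _ _
      have := h2 j₀
      omega
    obtain ⟨i₀, hi₀mem, hi₀2⟩ := hpig
    have hi₀E : E i₀ j₀ := by simpa using hi₀mem
    have hmemj : j₀ ∈ univ.filter (fun j => E i₀ j) := by simp [hi₀E]
    have hxi₀ : 1 ≤ x i₀ := by
      have hs : y i₀ j₀ ≤ ∑ j ∈ univ.filter (fun j => E i₀ j), y i₀ j :=
        Finset.single_le_sum (f := fun j => y i₀ j) (fun j _ => Nat.zero_le _) hmemj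
      have := h3 i₀
      omega
    set y' : I → J → ℕ := fun i j => if i = i₀ ∧ j = j₀ then y i j - 2 else y i j with hy'
    set x' : I → ℕ := fun i => if i = i₀ then x i - 1 else x i with hx'
    have hBmem : (∑ i : I, x i) - 1 ∈ B := by
      refine ⟨x', y', ?_, ?_, ?_, ?_⟩
      · intro i j hne
        simp only [hy'] at hne
        split at hne
        · next h => exact h.1 ▸ h.2 ▸ hi₀E
        · exact h1 i j hne
      · intro j
        by_cases hj : j = j₀
        · rw [hj]
          have hsum : ∑ i ∈ univ.filter (fun i => E i j₀), y' i j₀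
              = (y i₀ j₀ - 2) + ∑ i ∈ (univ.filter (fun i => E i j₀)).erase i₀, y i j₀ := by
            rw [← sum_if_point _ (fun i => y i j₀) i₀ (y i₀ j₀ - 2) hi₀mem]
            refine Finset.sum_congr rfl fun i _ => ?_
            by_cases h : i = i₀ <;> simp [hy', h]
          have hold : y i₀ j₀ + ∑ i ∈ (univ.filter (fun i => E i j₀)).erase i₀, y i j₀
              = ∑ i ∈ univ.filter (fun i => E i j₀), y i j₀ :=
            Finset.add_sum_erase _ (fun i => y i j₀) hi₀mem
          have h2' := h2 j₀
          simp only [hd', Function.update_self]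
          omega
        · have heq : ∑ i ∈ univ.filter (fun i => E i j), y' i j
              = ∑ i ∈ univ.filter (fun i => E i j), y i j :=
            Finset.sum_congr rfl fun i _ => by simp [hy', hj]
          have h2' := h2 j
          simp only [hd', Function.update_of_ne hj]
          omega
      · intro i
        by_cases hi : i = i₀
        · rw [hi]
          have hsum : ∑ j ∈ univ.filter (fun j => E i₀ j), y' i₀ j
              = (y i₀ j₀ - 2) + ∑ j ∈ (univ.filter (fun j => E i₀ j)).erase j₀, y i₀ j := by
            rw [← sum_if_point _ (fun j => y i₀ j) j₀ (y i₀ j₀ - 2) hmemj]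
            refine Finset.sum_congr rfl fun j _ => ?_
            by_cases h : j = j₀ <;> simp [hy', h]
          have hold : y i₀ j₀ + ∑ j ∈ (univ.filter (fun j => E i₀ j)).erase j₀, y i₀ j
              = ∑ j ∈ univ.filter (fun j => E i₀ j), y i₀ j :=
            Finset.add_sum_erase _ (fun j => y i₀ j) hmemj
          have h3' := h3 i₀
          have hx'i : x' i₀ = x i₀ - 1 := by simp [hx']
          omega
        · have heq : ∑ j ∈ univ.filter (fun j => E i j), y' i j
              = ∑ j ∈ univ.filter (fun j => E i j), y i j :=
            Finset.sum_congr rfl fun j _ => by simp [hy', hi]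
          have h3' := h3 i
          have hx'i : x' i = x i := by simp [hx', hi]
          omega
      · have hsum : ∑ i : I, x' i = (x i₀ - 1) + ∑ i ∈ univ.erase i₀, x i := by
          rw [← sum_if_point univ x i₀ (x i₀ - 1) (Finset.mem_univ i₀)]
          refine Finset.sum_congr rfl fun i _ => ?_
          by_cases h : i = i₀ <;> simp [hx', h]
        have hold : x i₀ + ∑ i ∈ univ.erase i₀, x i = ∑ i : I, x i :=
          Finset.add_sum_erase _ _ (Finset.mem_univ i₀)
        omega
    have hn1 : 1 ≤ ∑ i : I, x i := by
      have hs : x i₀ ≤ ∑ i : I, x i :=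
        Finset.single_le_sum (f := x) (fun i _ => Nat.zero_le _) (Finset.mem_univ i₀)
      omega
    have := Nat.sInf_le hBmem
    omega
  omega
end

section
/- Let X be a finite set with |X| divisible by 3 and S a collection of 3-element subsets of X. Build the bipartite Min-q-Multiset Multicover instance (for any fixed q ≥ 3) with locations I = S, regions J = X, edges {S, x} for x ∈ S, demands d(x) = 1 for all x, and budget B = |X|/3. Then this instance has a feasible solution x : I → ℤ≥0 with Σ_S x(S) ≤ B if and only if S contains an exact cover of X (a subcollection of pairwise disjoint sets whose union is X). -/
/-!
A feasible solution of budget `|X| / 3` is supported on at most `|X| / 3` sets, and its support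
must cover `X` (a region `j` receives service only from chosen sets containing it). Sets of size 3
covering `|X|` points with total size at most `|X|` cannot overlap, so the support is an exact
cover. Conversely, the indicator of an exact cover, each chosen set serving each of its elements
once, is feasible since `q ≥ 3`, and uses exactly `|X| / 3` sets.
-/

open Finset

namespace Finset

variable {ι α : Type*} [DecidableEq α]

theorem pairwiseDisjoint_of_sum_card_le_card_biUnion [DecidableEq ι] {s : Finset ι}
    {f : ι → Finset α} (h : ∑ i ∈ s, #(f i) ≤ #(s.biUnion f)) :
    (s : Set ι).PairwiseDisjoint f := by
  intro i hi j hj hij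
  rw [Function.onFun, disjoint_left]
  intro z hzi hzj
  rw [← insert_erase hi, sum_insert (notMem_erase i s), biUnion_insert] at h
  have hzt : z ∈ f i ∩ (s.erase i).biUnion f :=
    mem_inter.mpr ⟨hzi, mem_biUnion.mpr ⟨j, mem_erase.mpr ⟨hij.symm, hj⟩, hzj⟩⟩
  have hinter := card_union_add_card_inter (f i) ((s.erase i).biUnion f)
  have hpos : 0 < #(f i ∩ (s.erase i).biUnion f) := card_pos.mpr ⟨z, hzt⟩
  have hle : #((s.erase i).biUnion f) ≤ ∑ k ∈ s.erase i, #(f k) := card_biUnion_le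
  omega

theorem card_filter_ne_zero_le_sum (s : Finset ι) (f : ι → ℕ) :
    #(s.filter (f · ≠ 0)) ≤ ∑ i ∈ s, f i :=
  calc #(s.filter (f · ≠ 0)) = ∑ _i ∈ s.filter (f · ≠ 0), 1 := card_eq_sum_ones _
    _ ≤ ∑ i ∈ s.filter (f · ≠ 0), f i :=
      sum_le_sum fun _ hi => Nat.one_le_iff_ne_zero.mpr (mem_filter.mp hi).2
    _ ≤ ∑ i ∈ s, f i := sum_le_sum_of_subset (filter_subset _ _)

end Finset

section Multicover

variable {X : Type*} [Fintype X] [DecidableEq X] {𝒮 : Finset (Finset X)} {q : ℕ}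

theorem biUnion_support_eq_univ {x : Finset X → ℕ} {y : Finset X → X → ℕ}
    (hcov : ∀ j : X, 1 ≤ ∑ A ∈ 𝒮.filter (fun A => j ∈ A), y A j)
    (hcap : ∀ A ∈ 𝒮, ∑ j ∈ A, y A j ≤ q * x A) :
    (𝒮.filter (x · ≠ 0)).biUnion id = univ := by
  refine eq_univ_of_forall fun j => ?_
  obtain ⟨A, hA, hyA⟩ := exists_ne_zero_of_sum_ne_zero (Nat.one_le_iff_ne_zero.mp (hcov j))
  obtain ⟨hA𝒮, hjA⟩ := mem_filter.mp hA
  have hxA : x A ≠ 0 := by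
    intro hx
    have := (single_le_sum (fun _ _ => Nat.zero_le _) hjA).trans (hcap A hA𝒮)
    rw [hx, mul_zero] at this
    omega
  exact mem_biUnion.mpr ⟨A, mem_filter.mpr ⟨hA𝒮, hxA⟩, hjA⟩

theorem exists_exactCover_of_multicover {k : ℕ} (hk : ∀ A ∈ 𝒮, #A = k)
    {x : Finset X → ℕ} {y : Finset X → X → ℕ}
    (hcov : ∀ j : X, 1 ≤ ∑ A ∈ 𝒮.filter (fun A => j ∈ A), y A j)
    (hcap : ∀ A ∈ 𝒮, ∑ j ∈ A, y A j ≤ q * x A)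
    (hbudget : ∑ A ∈ 𝒮, x A ≤ Fintype.card X / k) :
    ∃ 𝒯 ⊆ 𝒮, (𝒯 : Set (Finset X)).PairwiseDisjoint id ∧ 𝒯.biUnion id = univ := by
  set 𝒯 := 𝒮.filter (x · ≠ 0)
  have hunion : 𝒯.biUnion id = univ := biUnion_support_eq_univ hcov hcap
  refine ⟨𝒯, filter_subset _ _, pairwiseDisjoint_of_sum_card_le_card_biUnion ?_, hunion⟩
  calc ∑ A ∈ 𝒯, #(id A) = #𝒯 * k := sum_const_nat fun A hA => hk A (filter_subset _ _ hA)
    _ ≤ Fintype.card X / k * k :=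
      Nat.mul_le_mul_right k ((card_filter_ne_zero_le_sum 𝒮 x).trans hbudget)
    _ ≤ Fintype.card X := Nat.div_mul_le_self _ _
    _ = #(𝒯.biUnion id) := by rw [hunion, card_univ]

theorem exists_multicover_of_cover {𝒯 : Finset (Finset X)} (h𝒯 : 𝒯 ⊆ 𝒮)
    (hunion : 𝒯.biUnion id = univ) (hq : ∀ A ∈ 𝒯, #A ≤ q) :
    ∃ x : Finset X → ℕ, ∃ y : Finset X → X → ℕ,
      (∀ A : Finset X, ∀ j : X, y A j ≠ 0 → A ∈ 𝒮 ∧ j ∈ A) ∧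
      (∀ j : X, 1 ≤ ∑ A ∈ 𝒮.filter (fun A => j ∈ A), y A j) ∧
      (∀ A ∈ 𝒮, ∑ j ∈ A, y A j ≤ q * x A) ∧
      ∑ A ∈ 𝒮, x A = #𝒯 := by
  refine ⟨fun A => if A ∈ 𝒯 then 1 else 0, fun A j => if A ∈ 𝒯 ∧ j ∈ A then 1 else 0,
    ?_, ?_, ?_, ?_⟩
  · intro A j hy
    have hAj : A ∈ 𝒯 ∧ j ∈ A := of_not_not fun h => hy (if_neg h)
    exact ⟨h𝒯 hAj.1, hAj.2⟩
  · intro j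
    obtain ⟨A, hA, hjA : j ∈ A⟩ := mem_biUnion.mp (hunion ▸ mem_univ j)
    refine le_trans ?_ (single_le_sum (fun _ _ => Nat.zero_le _)
      (mem_filter.mpr ⟨h𝒯 hA, hjA⟩))
    simp [hA, hjA]
  · intro A _
    by_cases hA : A ∈ 𝒯
    · simpa [hA] using hq A hA
    · simp [hA]
  · rw [sum_boole, filter_mem_eq_inter, inter_eq_right.mpr h𝒯, Nat.cast_id]

end Multicover

theorem stmt_19_general {X : Type*} [Fintype X] [DecidableEq X]
    (𝒮 : Finset (Finset X)) (h3 : ∀ A ∈ 𝒮, A.card = 3)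
    (q : ℕ) (hq : 3 ≤ q) :
    (∃ x : Finset X → ℕ, ∃ y : Finset X → X → ℕ,
        (∀ A : Finset X, ∀ j : X, y A j ≠ 0 → A ∈ 𝒮 ∧ j ∈ A) ∧
        (∀ j : X, 1 ≤ ∑ A ∈ 𝒮.filter (fun A => j ∈ A), y A j) ∧
        (∀ A ∈ 𝒮, (∑ j ∈ A, y A j) ≤ q * x A) ∧
        (∑ A ∈ 𝒮, x A) ≤ Fintype.card X / 3)
      ↔
    (∃ 𝒯 ⊆ 𝒮, (∀ A ∈ 𝒯, ∀ B ∈ 𝒯, A ≠ B → Disjoint A B) ∧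
        𝒯.biUnion id = Finset.univ) := by
  constructor
  · rintro ⟨x, y, -, hcov, hcap, hbudget⟩
    exact exists_exactCover_of_multicover h3 hcov hcap hbudget
  · rintro ⟨𝒯, h𝒯, hdisj, hunion⟩
    obtain ⟨x, y, hsupp, hcov, hcap, hsum⟩ :=
      exists_multicover_of_cover h𝒯 hunion fun A hA => (h3 A (h𝒯 hA)).trans_le hq
    have hcard : #𝒯 * 3 = Fintype.card X := by
      rw [← card_univ, ← hunion, card_biUnion (t := id) hdisj]
      exact (sum_const_nat fun A hA => h3 A (h𝒯 hA)).symm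
    exact ⟨x, y, hsupp, hcov, hcap, by omega⟩

theorem stmt_19 {X : Type*} [Fintype X] [DecidableEq X]
    (𝒮 : Finset (Finset X)) (h3 : ∀ A ∈ 𝒮, A.card = 3)
    (hdvd : 3 ∣ Fintype.card X)
    (q : ℕ) (hq : 3 ≤ q) :
    (∃ x : Finset X → ℕ, ∃ y : Finset X → X → ℕ,
        (∀ A : Finset X, ∀ j : X, y A j ≠ 0 → A ∈ 𝒮 ∧ j ∈ A) ∧
        (∀ j : X, 1 ≤ ∑ A ∈ 𝒮.filter (fun A => j ∈ A), y A j) ∧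
        (∀ A ∈ 𝒮, (∑ j ∈ A, y A j) ≤ q * x A) ∧
        (∑ A ∈ 𝒮, x A) ≤ Fintype.card X / 3)
      ↔
    (∃ 𝒯 ⊆ 𝒮, (∀ A ∈ 𝒯, ∀ B ∈ 𝒯, A ≠ B → Disjoint A B) ∧
        𝒯.biUnion id = Finset.univ) :=
  stmt_19_general 𝒮 h3 q hq
end
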